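/- arXiv:2306.13476 — 4 statements merged into one kernel-verified Lean document; each statement's English description precedes it below -/
import Mathlib

section
/- Suppose the constants η, k, ε, A_f, A_g > 0 satisfy k e^{-2πη} + ε A_g(1+k) ≤ k(1 - [((1 - e^{-2πη})/η)k + ε A_f(1+k)]) and ((1 - e^{-2πη})/η)k + ε A_f(1+k) < 1. Then for any φ Lipschitz with constant k, the function Γφ = R∘(id,φ)∘[Θ∘(id,φ)]^{-1} is well-defined and Lipschitz with constant at most k, where Θ(θ,ρ) = θ + 2πν + ((1 - e^{-2πη})/η)ρ + ε f(θ,ρ) and R(θ,ρ) = ρ e^{-2πη} + ε g(θ,ρ). -/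
/-!
Write `Θ(θ, φ θ) = θ + 2πν + P θ`. Under `hcond2` the perturbation `P` is `α`-Lipschitz with
`α = ((1 - e^{-2πη})/η) k + ε A_f (1 + k) < 1`, so `Θ ∘ (id, φ)` is a bijection whose inverse
is `(1 - α)⁻¹`-Lipschitz. The map `R ∘ (id, φ)` is `(k e^{-2πη} + ε A_g (1 + k))`-Lipschitz, and
`hcond1` says precisely that this constant times `(1 - α)⁻¹` is at most `k`.
-/

open Real

theorem mul_norm_sub_le_norm_sub_of_norm_sub_sub_le {E : Type*} [SeminormedAddCommGroup E]
    {T : E → E} {α : ℝ} (hT : ∀ x y, ‖T x - T y - (x - y)‖ ≤ α * ‖x - y‖) (x y : E) :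
    (1 - α) * ‖x - y‖ ≤ ‖T x - T y‖ := by
  have := norm_sub_le (T x - T y) (T x - T y - (x - y))
  rw [sub_sub_cancel] at this
  linarith [hT x y]

theorem bijective_of_norm_sub_sub_le {E : Type*} [NormedAddCommGroup E] [NormedSpace ℝ E]
    [CompleteSpace E] {T : E → E} {α : ℝ} (hα : α < 1)
    (hT : ∀ x y, ‖T x - T y - (x - y)‖ ≤ α * ‖x - y‖) : Function.Bijective T := by
  refine ⟨fun x y hxy => ?_, ?_⟩
  · have := mul_norm_sub_le_norm_sub_of_norm_sub_sub_le hT x y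
    rw [hxy, sub_self, norm_zero] at this
    exact sub_eq_zero.1 (norm_le_zero_iff.1 (nonpos_of_mul_nonpos_right this (by linarith)))
  · have happrox : ApproximatesLinearOn T (ContinuousLinearEquiv.refl ℝ E : E →L[ℝ] E)
        Set.univ (Real.toNNReal α) := fun x _ y _ =>
      (hT x y).trans (by gcongr; exact Real.le_coe_toNNReal α)
    refine happrox.surjective ?_
    rcases subsingleton_or_nontrivial E with hE | hE
    · exact .inl hE
    · right
      simpa [ContinuousLinearMap.nnnorm_id] using hα

theorem abs_sub_graph_le {F : ℝ → ℝ → ℝ} {φ : ℝ → ℝ} {A k : ℝ}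
    (hF : ∀ a b c d, |F a b - F c d| ≤ A * max |a - c| |b - d|)
    (hk : 0 ≤ k) (hφ : ∀ x y, |φ x - φ y| ≤ k * |x - y|) (x y : ℝ) :
    |F x (φ x) - F y (φ y)| ≤ A * (1 + k) * |x - y| := by
  have hA : 0 ≤ A := by simpa using (abs_nonneg _).trans (hF 1 0 0 0)
  have hmax : max |x - y| |φ x - φ y| ≤ (1 + k) * |x - y| :=
    max_le (by nlinarith [abs_nonneg (x - y)]) (by nlinarith [abs_nonneg (x - y), hφ x y])
  calc |F x (φ x) - F y (φ y)| ≤ A * max |x - y| |φ x - φ y| := hF _ _ _ _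
    _ ≤ A * ((1 + k) * |x - y|) := by gcongr
    _ = A * (1 + k) * |x - y| := by ring

theorem abs_sub_linear_add_graph_le {F : ℝ → ℝ → ℝ} {φ : ℝ → ℝ} {A k a ε : ℝ}
    (hF : ∀ a b c d, |F a b - F c d| ≤ A * max |a - c| |b - d|)
    (hk : 0 ≤ k) (hφ : ∀ x y, |φ x - φ y| ≤ k * |x - y|) (ha : 0 ≤ a) (hε : 0 ≤ ε) (x y : ℝ) :
    |(a * φ x + ε * F x (φ x)) - (a * φ y + ε * F y (φ y))|
      ≤ (a * k + ε * A * (1 + k)) * |x - y| :=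
  calc |(a * φ x + ε * F x (φ x)) - (a * φ y + ε * F y (φ y))|
      = |a * (φ x - φ y) + ε * (F x (φ x) - F y (φ y))| := by congr 1; ring
    _ ≤ a * |φ x - φ y| + ε * |F x (φ x) - F y (φ y)| := by
      simpa only [abs_mul, abs_of_nonneg ha, abs_of_nonneg hε] using
        abs_add_le (a * (φ x - φ y)) (ε * (F x (φ x) - F y (φ y)))
    _ ≤ a * (k * |x - y|) + ε * (A * (1 + k) * |x - y|) := by
      gcongr
      · exact hφ x y
      · exact abs_sub_graph_le hF hk hφ x y
    _ = (a * k + ε * A * (1 + k)) * |x - y| := by ring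

theorem graph_transform_well_defined_general
    (η ν ε k A_f A_g : ℝ) (hη : 0 < η) (hε : 0 ≤ ε) (hk : 0 < k)
    (f g : ℝ → ℝ → ℝ)
    (hf : ∀ a b c d : ℝ, |f a b - f c d| ≤ A_f * max |a - c| |b - d|)
    (hg : ∀ a b c d : ℝ, |g a b - g c d| ≤ A_g * max |a - c| |b - d|)
    (hcond1 : k * exp (-(2*π*η)) + ε * A_g * (1 + k)
      ≤ k * (1 - (((1 - exp (-(2*π*η)))/η) * k + ε * A_f * (1 + k))))
    (hcond2 : ((1 - exp (-(2*π*η)))/η) * k + ε * A_f * (1 + k) < 1)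
    (φ : ℝ → ℝ)
    (hφ : ∀ x y, |φ x - φ y| ≤ k * |x - y|)
    (T : ℝ → ℝ)
    (hT : ∀ θ, T θ = θ + 2*π*ν + ((1 - exp (-(2*π*η)))/η) * φ θ + ε * f θ (φ θ)) :
    Function.Bijective T ∧
    ∀ ψ : ℝ → ℝ, Function.LeftInverse ψ T → Function.RightInverse ψ T →
      ∀ x y : ℝ,
        |((φ (ψ x)) * exp (-(2*π*η)) + ε * g (ψ x) (φ (ψ x)))
          - ((φ (ψ y)) * exp (-(2*π*η)) + ε * g (ψ y) (φ (ψ y)))|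
        ≤ k * |x - y| := by
  set E := exp (-(2*π*η))
  set α := ((1 - E)/η) * k + ε * A_f * (1 + k)
  have hL : 0 ≤ (1 - E)/η :=
    div_nonneg (sub_nonneg.2 (exp_le_one_iff.2 (by nlinarith [pi_pos]))) hη.le
  have hTα : ∀ x y, ‖T x - T y - (x - y)‖ ≤ α * ‖x - y‖ := fun x y => by
    rw [Real.norm_eq_abs, Real.norm_eq_abs, hT, hT]
    convert abs_sub_linear_add_graph_le hf hk.le hφ hL hε x y using 2
    ring
  refine ⟨bijective_of_norm_sub_sub_le hcond2 hTα, fun ψ _ hψ x y => ?_⟩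
  have hψx : (1 - α) * |ψ x - ψ y| ≤ |x - y| := by
    simpa only [Real.norm_eq_abs, hψ x, hψ y]
      using mul_norm_sub_le_norm_sub_of_norm_sub_sub_le hTα (ψ x) (ψ y)
  calc |(φ (ψ x) * E + ε * g (ψ x) (φ (ψ x))) - (φ (ψ y) * E + ε * g (ψ y) (φ (ψ y)))|
      ≤ (E * k + ε * A_g * (1 + k)) * |ψ x - ψ y| := by
        convert abs_sub_linear_add_graph_le hg hk.le hφ (exp_pos _).le hε (ψ x) (ψ y) using 2
        ring
    _ ≤ k * (1 - α) * |ψ x - ψ y| := by gcongr; linarith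
    _ = k * ((1 - α) * |ψ x - ψ y|) := by ring
    _ ≤ k * |x - y| := by gcongr

/-- Well-definition of the graph transform: under the compatibility conditions on
`η, k, ε, A_f, A_g`, for any `k`-Lipschitz `φ` with values in `[-1,1]`, the map
`T = Θ∘(id,φ)` is a bijection of `ℝ` and `Γφ = R∘(id,φ)∘T⁻¹` is Lipschitz with constant
at most `k`, where `Θ(θ,ρ) = θ + 2πν + ((1-e^{-2πη})/η)ρ + ε f(θ,ρ)` and
`R(θ,ρ) = ρ e^{-2πη} + ε g(θ,ρ)`. -/
theorem graph_transform_well_defined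
    (η ν ε k A_f A_g : ℝ) (hη : 0 < η) (hε : 0 ≤ ε) (hk : 0 < k)
    (f g : ℝ → ℝ → ℝ)
    (hf : ∀ a b c d : ℝ, |f a b - f c d| ≤ A_f * max |a - c| |b - d|)
    (hg : ∀ a b c d : ℝ, |g a b - g c d| ≤ A_g * max |a - c| |b - d|)
    (hcond1 : k * exp (-(2*π*η)) + ε * A_g * (1 + k)
      ≤ k * (1 - (((1 - exp (-(2*π*η)))/η) * k + ε * A_f * (1 + k))))
    (hcond2 : ((1 - exp (-(2*π*η)))/η) * k + ε * A_f * (1 + k) < 1)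
    (φ : ℝ → ℝ) (hφmem : ∀ θ, φ θ ∈ Set.Icc (-1:ℝ) 1)
    (hφ : ∀ x y, |φ x - φ y| ≤ k * |x - y|)
    (T : ℝ → ℝ)
    (hT : ∀ θ, T θ = θ + 2*π*ν + ((1 - exp (-(2*π*η)))/η) * φ θ + ε * f θ (φ θ)) :
    Function.Bijective T ∧
    ∀ ψ : ℝ → ℝ, Function.LeftInverse ψ T → Function.RightInverse ψ T →
      ∀ x y : ℝ,
        |((φ (ψ x)) * exp (-(2*π*η)) + ε * g (ψ x) (φ (ψ x)))
          - ((φ (ψ y)) * exp (-(2*π*η)) + ε * g (ψ y) (φ (ψ y)))|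
        ≤ k * |x - y| :=
  graph_transform_well_defined_general η ν ε k A_f A_g hη hε hk f g hf hg hcond1 hcond2 φ hφ T hT
end

section
/- There exists c > 0 such that whenever 0 < η ≤ c, ε ≤ (π/(6A)) η k, and k ≤ η/6 (with A = A_f + A_g), the inequality k(1 - e^{-2πη} - [((1 - e^{-2πη})/η)k + ε A_f(1+k)]) ≥ ε A_g(1+k) holds; hence the graph transform Γ maps Lip_k to itself. -/
open Real

/-! With `u = 1 - e^{-2πη}`, the bound `1 - e^{-x} ≥ x / 2` on `[0, 1]` gives `u ≥ πη` once
`η ≤ 1/(2π)`. The hypothesis `k ≤ η/6` makes the term `(u/η)k²` at most `ku/6`, and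
`ε ≤ πηk/(6A)` makes both `ε`-terms together at most `2εA ≤ πηk/3 ≤ ku/3`, so the right-hand
side exceeds the left by at least `ku/2`. -/

lemma half_le_one_sub_exp_neg {x : ℝ} (hx₀ : 0 ≤ x) (hx₁ : x ≤ 1) : x / 2 ≤ 1 - exp (-x) := by
  have h : exp (-x) * (1 + x) ≤ 1 := by
    calc exp (-x) * (1 + x) ≤ exp (-x) * exp x := by gcongr; linarith [add_one_le_exp x]
      _ = 1 := by rw [← exp_add, neg_add_cancel, exp_zero]
  nlinarith [exp_pos (-x)]

lemma pi_mul_le_one_sub_exp_neg {η : ℝ} (hη₀ : 0 ≤ η) (hη₁ : η ≤ 1 / (2 * π)) :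
    π * η ≤ 1 - exp (-(2 * π * η)) := by
  have h : 2 * π * η ≤ 1 := by
    rwa [le_div_iff₀ (by positivity), mul_comm] at hη₁
  linarith [half_le_one_sub_exp_neg (by positivity) h]

lemma pos_and_mul_le_of_le_div_mul {ε a b A : ℝ} (hε : 0 < ε) (ha : 0 ≤ a) (hb : 0 ≤ b)
    (h : ε ≤ a / A * b) : 0 < A ∧ ε * A ≤ a * b := by
  have hA : 0 < A := by
    -- for `A = 0` the bound is `0` because `a / 0 = 0`
    by_contra! hA
    have : a / A * b ≤ 0 :=
      mul_nonpos_of_nonpos_of_nonneg (div_nonpos_of_nonneg_of_nonpos ha hA) hb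
    linarith
  refine ⟨hA, ?_⟩
  rwa [div_mul_eq_mul_div, le_div_iff₀ hA] at h

lemma one_add_mul_add_mul_le_two_mul {a b k : ℝ} (ha : 0 ≤ a) (hab : 0 ≤ a + b) (hk₀ : 0 ≤ k)
    (hk₁ : k ≤ 1) : (1 + k) * (b + k * a) ≤ 2 * (a + b) := by
  rcases le_total 0 (b + k * a) with hnonneg | hnonpos
  · nlinarith [mul_le_mul_of_nonneg_right (by linarith : 1 + k ≤ 2) hnonneg]
  · nlinarith [mul_nonpos_of_nonneg_of_nonpos (by linarith : 0 ≤ 1 + k) hnonpos]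

theorem graph_transform_compatibility_general (A_f A_g : ℝ) (hAf : 0 < A_f) :
    ∃ c > (0:ℝ), ∀ η k ε : ℝ, 0 < η → 0 < k → 0 < ε →
      η ≤ c → ε ≤ (π / (6 * (A_f + A_g))) * η * k → k ≤ η / 6 →
      ε * A_g * (1 + k)
        ≤ k * (1 - exp (-(2*π*η))
            - (((1 - exp (-(2*π*η)))/η) * k + ε * A_f * (1 + k))) := by
  refine ⟨1 / (2 * π), by positivity, fun η k ε hη hk hε hηc hεb hkη => ?_⟩
  set u := 1 - exp (-(2 * π * η))
  have hu : π * η ≤ u := pi_mul_le_one_sub_exp_neg hη.le hηc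
  have hu₀ : 0 ≤ u := (by positivity : 0 ≤ π * η).trans hu
  obtain ⟨hA, hεA⟩ := pos_and_mul_le_of_le_div_mul (A := 6 * (A_f + A_g)) hε
    (by positivity : 0 ≤ π * η) hk.le (by rwa [div_mul_eq_mul_div] at hεb)
  have hk₁ : k ≤ 1 := by
    have : η ≤ 1 := hηc.trans (by rw [div_le_one (by positivity)]; linarith [pi_gt_three])
    linarith
  have hquot : u / η * k ≤ u / 6 := by
    rw [div_mul_eq_mul_div, div_le_div_iff₀ hη (by norm_num)]
    nlinarith [mul_le_mul_of_nonneg_left hkη hu₀]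
  have hcoupling : ε * ((1 + k) * (A_g + k * A_f)) ≤ ε * (2 * (A_f + A_g)) :=
    mul_le_mul_of_nonneg_left (one_add_mul_add_mul_le_two_mul hAf.le (by linarith) hk.le hk₁) hε.le
  calc ε * A_g * (1 + k) = ε * ((1 + k) * (A_g + k * A_f)) - k * (ε * A_f * (1 + k)) := by ring
    _ ≤ k * u / 3 - k * (ε * A_f * (1 + k)) := by
      linarith [mul_le_mul_of_nonneg_left hu hk.le]
    _ ≤ k * (u - (u / η * k + ε * A_f * (1 + k))) := by
      linarith [mul_le_mul_of_nonneg_left hquot hk.le, mul_nonneg hk.le hu₀]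

/-- There is `c > 0` such that whenever `0 < η ≤ c`, `ε ≤ (π/(6A)) η k` and `k ≤ η/6`
(with `A = A_f + A_g`), the compatibility inequality
`k(1 - e^{-2πη} - [((1-e^{-2πη})/η)k + εA_f(1+k)]) ≥ εA_g(1+k)` holds; this is the
condition under which the graph transform maps `Lip_k` to itself. -/
theorem graph_transform_compatibility (A_f A_g : ℝ) (hAf : 0 < A_f) (hAg : 0 < A_g) :
    ∃ c > (0:ℝ), ∀ η k ε : ℝ, 0 < η → 0 < k → 0 < ε →
      η ≤ c → ε ≤ (π / (6 * (A_f + A_g))) * η * k → k ≤ η / 6 →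
      ε * A_g * (1 + k)
        ≤ k * (1 - exp (-(2*π*η))
            - (((1 - exp (-(2*π*η)))/η) * k + ε * A_f * (1 + k))) :=
  graph_transform_compatibility_general A_f A_g hAf
end

section
/- Let Q = (Θ, R) with Θ, R as in the graph transform setting, and assume the conditions of the well-definition proposition hold, so that in particular C := Lip R + k(2π + ε A_f) satisfies C = e^{-2πη} + ε A_g + 2πk + εk A_f < 1. Then for every φ Lipschitz with constant k taking values in [-1,1] and every (θ,ρ) ∈ ℝ × [-1,1], one has |R(θ,ρ) - Γφ(Θ(θ,ρ))| ≤ C·|ρ - φ(θ)|. -/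
open Real

/-!
Since `Γφ` is the graph transform, `Γφ (Θ θ (φ θ)) = R θ (φ θ)`. Passing through the point
`(θ, φ θ)` of the graph, `|R(θ,ρ) - Γφ(Θ(θ,ρ))|` splits into the vertical variation of `R`,
at most `(e^{-2πη} + εA_g)|ρ - φ θ|`, plus `k` times the vertical variation of `Θ`, at most
`(2π + εA_f)|ρ - φ θ|` because `0 ≤ (1 - e^{-2πη})/η ≤ 2π`.
-/

lemma one_sub_exp_neg_mul_div_nonneg {a η : ℝ} (ha : 0 ≤ a) (hη : 0 < η) :
    0 ≤ (1 - exp (-(a * η))) / η :=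
  div_nonneg (sub_nonneg.2 (exp_le_one_iff.2 (by nlinarith))) hη.le

lemma one_sub_exp_neg_mul_div_le (a : ℝ) {η : ℝ} (hη : 0 < η) :
    (1 - exp (-(a * η))) / η ≤ a := by
  rw [div_le_iff₀ hη]
  linarith [add_one_le_exp (-(a * η))]

lemma abs_sub_le_of_abs_sub_le_mul_max {A : ℝ} {g : ℝ → ℝ → ℝ}
    (hg : ∀ a b c d : ℝ, |g a b - g c d| ≤ A * max |a - c| |b - d|) (θ ρ ρ' : ℝ) :
    |g θ ρ - g θ ρ'| ≤ A * |ρ - ρ'| := by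
  simpa using hg θ ρ θ ρ'

lemma abs_mul_add_mul_sub_le {c ε A x u v : ℝ} (hε : 0 ≤ ε) (huv : |u - v| ≤ A * |x|) :
    |c * x + ε * (u - v)| ≤ (|c| + ε * A) * |x| :=
  calc |c * x + ε * (u - v)| ≤ |c| * |x| + ε * |u - v| := by
        simpa only [abs_mul, abs_of_nonneg hε] using abs_add_le (c * x) (ε * (u - v))
    _ ≤ |c| * |x| + ε * (A * |x|) := by gcongr
    _ = (|c| + ε * A) * |x| := by ring

lemma abs_sub_le_add_of_lipschitz_of_apply_eq {R Θ : ℝ → ℝ → ℝ} {Γ : ℝ → ℝ} {k θ ρ σ : ℝ}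
    (hΓ : ∀ x y, |Γ x - Γ y| ≤ k * |x - y|) (hσ : Γ (Θ θ σ) = R θ σ) :
    |R θ ρ - Γ (Θ θ ρ)| ≤ |R θ ρ - R θ σ| + k * |Θ θ σ - Θ θ ρ| :=
  calc |R θ ρ - Γ (Θ θ ρ)| ≤ |R θ ρ - R θ σ| + |R θ σ - Γ (Θ θ ρ)| := abs_sub_le _ _ _
    _ ≤ |R θ ρ - R θ σ| + k * |Θ θ σ - Θ θ ρ| := by rw [← hσ]; gcongr; exact hΓ _ _

section VerticalVariation

variable {η ε A : ℝ} {g : ℝ → ℝ → ℝ}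

lemma abs_angular_sub_le (ν : ℝ) (hη : 0 < η) (hε : 0 ≤ ε)
    (hg : ∀ a b c d : ℝ, |g a b - g c d| ≤ A * max |a - c| |b - d|)
    {Θ : ℝ → ℝ → ℝ}
    (hΘ : ∀ θ ρ, Θ θ ρ = θ + 2*π*ν + ((1 - exp (-(2*π*η)))/η) * ρ + ε * g θ ρ)
    (θ ρ ρ' : ℝ) :
    |Θ θ ρ - Θ θ ρ'| ≤ (2*π + ε * A) * |ρ - ρ'| := by
  have hc := one_sub_exp_neg_mul_div_nonneg (by positivity : 0 ≤ 2*π) hη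
  calc |Θ θ ρ - Θ θ ρ'|
      = |(1 - exp (-(2*π*η)))/η * (ρ - ρ') + ε * (g θ ρ - g θ ρ')| := by
        rw [hΘ, hΘ]; ring_nf
    _ ≤ (|(1 - exp (-(2*π*η)))/η| + ε * A) * |ρ - ρ'| :=
        abs_mul_add_mul_sub_le hε (abs_sub_le_of_abs_sub_le_mul_max hg θ ρ ρ')
    _ ≤ (2*π + ε * A) * |ρ - ρ'| := by
        rw [abs_of_nonneg hc]; gcongr; exact one_sub_exp_neg_mul_div_le _ hη

lemma abs_radial_sub_le (hε : 0 ≤ ε)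
    (hg : ∀ a b c d : ℝ, |g a b - g c d| ≤ A * max |a - c| |b - d|)
    {R : ℝ → ℝ → ℝ} (hR : ∀ θ ρ, R θ ρ = ρ * exp (-(2*π*η)) + ε * g θ ρ) (θ ρ ρ' : ℝ) :
    |R θ ρ - R θ ρ'| ≤ (exp (-(2*π*η)) + ε * A) * |ρ - ρ'| :=
  calc |R θ ρ - R θ ρ'| = |exp (-(2*π*η)) * (ρ - ρ') + ε * (g θ ρ - g θ ρ')| := by
        rw [hR, hR]; ring_nf
    _ ≤ (|exp (-(2*π*η))| + ε * A) * |ρ - ρ'| :=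
        abs_mul_add_mul_sub_le hε (abs_sub_le_of_abs_sub_le_mul_max hg θ ρ ρ')
    _ = (exp (-(2*π*η)) + ε * A) * |ρ - ρ'| := by rw [abs_of_pos (exp_pos _)]

end VerticalVariation

theorem graph_transform_key_estimate_general
    (η ν ε k A_f A_g : ℝ) (hη : 0 < η) (hε : 0 ≤ ε) (hk : 0 < k)
    (f g : ℝ → ℝ → ℝ)
    (hf : ∀ a b c d : ℝ, |f a b - f c d| ≤ A_f * max |a - c| |b - d|)
    (hg : ∀ a b c d : ℝ, |g a b - g c d| ≤ A_g * max |a - c| |b - d|)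
    (Θ R : ℝ → ℝ → ℝ)
    (hΘ : ∀ θ ρ, Θ θ ρ = θ + 2*π*ν + ((1 - exp (-(2*π*η)))/η) * ρ + ε * f θ ρ)
    (hR : ∀ θ ρ, R θ ρ = ρ * exp (-(2*π*η)) + ε * g θ ρ)
    (φ : ℝ → ℝ)
    (ψ : ℝ → ℝ)
    (hψ : Function.LeftInverse ψ (fun θ => Θ θ (φ θ)))
    (Γφ : ℝ → ℝ) (hΓφ : ∀ x, Γφ x = R (ψ x) (φ (ψ x)))
    (hΓφLip : ∀ x y, |Γφ x - Γφ y| ≤ k * |x - y|) :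
    ∀ θ ρ : ℝ, ρ ∈ Set.Icc (-1:ℝ) 1 →
      |R θ ρ - Γφ (Θ θ ρ)|
        ≤ (exp (-(2*π*η)) + ε * A_g + k * (2*π + ε * A_f)) * |ρ - φ θ| := by
  intro θ ρ _
  have hgraph : Γφ (Θ θ (φ θ)) = R θ (φ θ) := by rw [hΓφ, hψ θ]
  calc |R θ ρ - Γφ (Θ θ ρ)| ≤ |R θ ρ - R θ (φ θ)| + k * |Θ θ (φ θ) - Θ θ ρ| :=
        abs_sub_le_add_of_lipschitz_of_apply_eq hΓφLip hgraph
    _ ≤ (exp (-(2*π*η)) + ε * A_g) * |ρ - φ θ| + k * ((2*π + ε * A_f) * |ρ - φ θ|) := by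
        gcongr
        · exact abs_radial_sub_le hε hg hR θ ρ (φ θ)
        · rw [abs_sub_comm ρ]; exact abs_angular_sub_le ν hη hε hf hΘ θ (φ θ) ρ
    _ = (exp (-(2*π*η)) + ε * A_g + k * (2*π + ε * A_f)) * |ρ - φ θ| := by ring

/-- Key estimate for the contraction: with `Θ, R` as in the graph transform setting and
`C = e^{-2πη} + εA_g + k(2π + εA_f) < 1`, for every `k`-Lipschitz `φ` with values in
`[-1,1]` and every `(θ,ρ) ∈ ℝ × [-1,1]` one has
`|R(θ,ρ) - Γφ(Θ(θ,ρ))| ≤ C |ρ - φ(θ)|`, where `Γφ = R∘(id,φ)∘[Θ∘(id,φ)]⁻¹`. -/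
theorem graph_transform_key_estimate
    (η ν ε k A_f A_g : ℝ) (hη : 0 < η) (hε : 0 ≤ ε) (hk : 0 < k)
    (f g : ℝ → ℝ → ℝ)
    (hf : ∀ a b c d : ℝ, |f a b - f c d| ≤ A_f * max |a - c| |b - d|)
    (hg : ∀ a b c d : ℝ, |g a b - g c d| ≤ A_g * max |a - c| |b - d|)
    (Θ R : ℝ → ℝ → ℝ)
    (hΘ : ∀ θ ρ, Θ θ ρ = θ + 2*π*ν + ((1 - exp (-(2*π*η)))/η) * ρ + ε * f θ ρ)
    (hR : ∀ θ ρ, R θ ρ = ρ * exp (-(2*π*η)) + ε * g θ ρ)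
    (hC : exp (-(2*π*η)) + ε * A_g + k * (2*π + ε * A_f) < 1)
    (φ : ℝ → ℝ) (hφmem : ∀ θ, φ θ ∈ Set.Icc (-1:ℝ) 1)
    (hφ : ∀ x y, |φ x - φ y| ≤ k * |x - y|)
    (ψ : ℝ → ℝ)
    (hψ : Function.LeftInverse ψ (fun θ => Θ θ (φ θ)))
    (hψ' : Function.RightInverse ψ (fun θ => Θ θ (φ θ)))
    (Γφ : ℝ → ℝ) (hΓφ : ∀ x, Γφ x = R (ψ x) (φ (ψ x)))
    (hΓφLip : ∀ x y, |Γφ x - Γφ y| ≤ k * |x - y|) :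
    ∀ θ ρ : ℝ, ρ ∈ Set.Icc (-1:ℝ) 1 →
      |R θ ρ - Γφ (Θ θ ρ)|
        ≤ (exp (-(2*π*η)) + ε * A_g + k * (2*π + ε * A_f)) * |ρ - φ θ| :=
  graph_transform_key_estimate_general η ν ε k A_f A_g hη hε hk f g hf hg Θ R hΘ hR φ ψ hψ Γφ hΓφ
    hΓφLip
end

section
/- Under the hypotheses of the key estimate |R(θ,ρ) - Γφ(Θ(θ,ρ))| ≤ C|ρ - φ(θ)| with C < 1, the graph transform Γ is a contraction on Lip_k with the C⁰ metric: for all φ₁, φ₂ ∈ Lip_k, ‖Γφ₁ - Γφ₂‖_∞ ≤ C·‖φ₁ - φ₂‖_∞. Consequently Γ has a unique fixed point φ* in Lip_k, and the graph of φ* is invariant under Q. -/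
open Real BoundedContinuousFunction Function Set

/-- `Lip_k`: `2π`-periodic Lipschitz functions `ℝ → [-1,1]` with Lipschitz constant `≤ k`. -/
def LipSet (k : ℝ) : Set (ℝ → ℝ) :=
  {φ | Function.Periodic φ (2*π) ∧ (∀ θ, φ θ ∈ Set.Icc (-1:ℝ) 1) ∧
    ∀ x y, |φ x - φ y| ≤ k * |x - y|}

/-!
Given `x`, write `x = Θ(θ, φ₂ θ)` using that `θ ↦ Θ(θ, φ₂ θ)` is onto. Then
`Γφ₂ x = R(θ, φ₂ θ)`, and the key estimate for `φ₁` at `ρ = φ₂ θ` bounds `|Γφ₁ x - Γφ₂ x|` by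
`C |φ₂ θ - φ₁ θ|`. So `Γ` is a `C`-contraction for the sup metric on `Lip_k`, which is complete
because it is a pointwise closed set of uniformly bounded continuous functions; Banach's fixed
point theorem gives `φ*`, and `Γφ* = φ*` evaluated along the graph is the invariance of `Gr φ*`.
-/

theorem abs_sub_le_of_graph_transform {Θ R : ℝ → ℝ → ℝ} {φ₁ φ₂ ψ₁ ψ₂ : ℝ → ℝ} {C B : ℝ}
    (hC0 : 0 ≤ C) (hψ₂ : ∀ θ, ψ₂ (Θ θ (φ₂ θ)) = R θ (φ₂ θ))
    (hsurj : Surjective fun θ => Θ θ (φ₂ θ))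
    (hkey : ∀ θ, |R θ (φ₂ θ) - ψ₁ (Θ θ (φ₂ θ))| ≤ C * |φ₂ θ - φ₁ θ|)
    (hB : ∀ θ, |φ₁ θ - φ₂ θ| ≤ B) (x : ℝ) :
    |ψ₁ x - ψ₂ x| ≤ C * B := by
  obtain ⟨θ, rfl⟩ := hsurj x
  calc |ψ₁ (Θ θ (φ₂ θ)) - ψ₂ (Θ θ (φ₂ θ))| = |R θ (φ₂ θ) - ψ₁ (Θ θ (φ₂ θ))| := by
        rw [hψ₂, abs_sub_comm]
    _ ≤ C * |φ₂ θ - φ₁ θ| := hkey θ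
    _ ≤ C * B := mul_le_mul_of_nonneg_left (abs_sub_comm (φ₂ θ) (φ₁ θ) ▸ hB θ) hC0

section SupContraction

variable {X : Type*} [TopologicalSpace X] {S : Set (X → ℝ)} {M : ℝ} {T : (X → ℝ) → (X → ℝ)}

noncomputable def restrictBCF (hcont : ∀ φ ∈ S, Continuous φ) (hbdd : ∀ φ ∈ S, ∀ x, ‖φ x‖ ≤ M)
    (hT : MapsTo T S S) (f : {f : X →ᵇ ℝ // ⇑f ∈ S}) : {f : X →ᵇ ℝ // ⇑f ∈ S} :=
  ⟨ofNormedAddCommGroup (T f) (hcont _ (hT f.2)) M (hbdd _ (hT f.2)), hT f.2⟩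

theorem contractingWith_restrictBCF (hcont : ∀ φ ∈ S, Continuous φ)
    (hbdd : ∀ φ ∈ S, ∀ x, ‖φ x‖ ≤ M) (hT : MapsTo T S S) {C : ℝ} (hC0 : 0 ≤ C) (hC : C < 1)
    (hcontr : ∀ φ₁ ∈ S, ∀ φ₂ ∈ S, ∀ B : ℝ,
      (∀ x, |φ₁ x - φ₂ x| ≤ B) → ∀ x, |T φ₁ x - T φ₂ x| ≤ C * B) :
    ContractingWith ⟨C, hC0⟩ (restrictBCF hcont hbdd hT) := by
  refine ⟨by exact_mod_cast hC, LipschitzWith.of_dist_le_mul fun f g => ?_⟩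
  refine (dist_le (mul_nonneg hC0 dist_nonneg)).2 fun x => ?_
  exact hcontr f f.2 g g.2 (dist f g) (fun y => dist_coe_le_dist (f := f.1) (g := g.1) y) x

theorem existsUnique_isFixedPt_of_sup_contracting (hS : IsClosed S) (hne : S.Nonempty)
    (hcont : ∀ φ ∈ S, Continuous φ) (hbdd : ∀ φ ∈ S, ∀ x, ‖φ x‖ ≤ M) (hT : MapsTo T S S)
    {C : ℝ} (hC0 : 0 ≤ C) (hC : C < 1)
    (hcontr : ∀ φ₁ ∈ S, ∀ φ₂ ∈ S, ∀ B : ℝ,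
      (∀ x, |φ₁ x - φ₂ x| ≤ B) → ∀ x, |T φ₁ x - T φ₂ x| ≤ C * B) :
    ∃! φ, φ ∈ S ∧ T φ = φ := by
  have : CompleteSpace {f : X →ᵇ ℝ // ⇑f ∈ S} :=
    (hS.preimage continuous_coe).completeSpace_coe
  obtain ⟨φ₀, hφ₀⟩ := hne
  have : Nonempty {f : X →ᵇ ℝ // ⇑f ∈ S} :=
    ⟨⟨ofNormedAddCommGroup φ₀ (hcont φ₀ hφ₀) M (hbdd φ₀ hφ₀), hφ₀⟩⟩
  have hG := contractingWith_restrictBCF hcont hbdd hT hC0 hC hcontr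
  have hfix := hG.fixedPoint_isFixedPt
  refine ⟨_, ⟨(hG.fixedPoint _).2, congrArg (fun f : {f : X →ᵇ ℝ // ⇑f ∈ S} => ⇑f.1) hfix⟩, ?_⟩
  rintro ψ ⟨hψ, hTψ⟩
  have hψfix : IsFixedPt (restrictBCF hcont hbdd hT)
      ⟨ofNormedAddCommGroup ψ (hcont ψ hψ) M (hbdd ψ hψ), hψ⟩ :=
    Subtype.ext (BoundedContinuousFunction.ext (congrFun hTψ))
  exact congrArg (fun f : {f : X →ᵇ ℝ // ⇑f ∈ S} => ⇑f.1) (hG.fixedPoint_unique' hψfix hfix)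

end SupContraction

namespace LipSet

variable {k : ℝ} {φ : ℝ → ℝ}

theorem norm_le_one (hφ : φ ∈ LipSet k) (θ : ℝ) : ‖φ θ‖ ≤ 1 :=
  abs_le.2 (hφ.2.1 θ)

theorem lipschitzWith (hφ : φ ∈ LipSet k) : LipschitzWith k.toNNReal φ :=
  LipschitzWith.of_dist_le_mul fun x y =>
    (hφ.2.2 x y).trans (mul_le_mul_of_nonneg_right (le_coe_toNNReal k) (abs_nonneg _))

theorem zero_mem (hk : 0 ≤ k) : (0 : ℝ → ℝ) ∈ LipSet k :=
  ⟨fun _ => rfl, fun _ => by norm_num, fun x y => by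
    simpa only [Pi.zero_apply, sub_self, abs_zero] using mul_nonneg hk (abs_nonneg (x - y))⟩

theorem isClosed (k : ℝ) : IsClosed (LipSet k) := by
  simp only [LipSet, Periodic, mem_Icc, ofPred_and, ofPred_forall]
  refine .inter (isClosed_iInter fun θ => isClosed_eq (continuous_apply _) (continuous_apply _))
    (.inter (isClosed_iInter fun θ => .inter (isClosed_le continuous_const (continuous_apply θ))
      (isClosed_le (continuous_apply θ) continuous_const))
    (isClosed_iInter fun x => isClosed_iInter fun y =>
      isClosed_le ((continuous_apply x).sub (continuous_apply y)).abs continuous_const))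

end LipSet

/-- Under the key estimate `|R(θ,ρ) - Γφ(Θ(θ,ρ))| ≤ C|ρ - φ(θ)|` with `C < 1`, the graph
transform `Γ` is a `C`-contraction on `Lip_k` for the sup metric, and hence has a unique
fixed point `φ*` in `Lip_k`, whose graph is invariant under `Q = (Θ,R)`. -/
theorem graph_transform_contraction_fixed_point
    (k C : ℝ) (hk : 0 < k) (hC0 : 0 ≤ C) (hC : C < 1)
    (Θ R : ℝ → ℝ → ℝ)
    (Γ : (ℝ → ℝ) → (ℝ → ℝ))
    (hΓ : ∀ φ ∈ LipSet k, ∀ θ : ℝ, Γ φ (Θ θ (φ θ)) = R θ (φ θ))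
    (hsurj : ∀ φ ∈ LipSet k, Function.Surjective (fun θ => Θ θ (φ θ)))
    (hmaps : ∀ φ ∈ LipSet k, Γ φ ∈ LipSet k)
    (hkey : ∀ φ ∈ LipSet k, ∀ θ ρ : ℝ, ρ ∈ Set.Icc (-1:ℝ) 1 →
      |R θ ρ - Γ φ (Θ θ ρ)| ≤ C * |ρ - φ θ|) :
    (∀ φ₁ ∈ LipSet k, ∀ φ₂ ∈ LipSet k, ∀ B : ℝ,
      (∀ θ, |φ₁ θ - φ₂ θ| ≤ B) → ∀ x, |Γ φ₁ x - Γ φ₂ x| ≤ C * B) ∧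
    (∃! φstar : ℝ → ℝ, φstar ∈ LipSet k ∧ Γ φstar = φstar ∧
      ∀ θ : ℝ, R θ (φstar θ) = φstar (Θ θ (φstar θ))) := by
  have hcontr : ∀ φ₁ ∈ LipSet k, ∀ φ₂ ∈ LipSet k, ∀ B : ℝ,
      (∀ θ, |φ₁ θ - φ₂ θ| ≤ B) → ∀ x, |Γ φ₁ x - Γ φ₂ x| ≤ C * B :=
    fun φ₁ h₁ φ₂ h₂ _ hB => abs_sub_le_of_graph_transform hC0 (hΓ φ₂ h₂) (hsurj φ₂ h₂)
      (fun θ => hkey φ₁ h₁ θ _ (h₂.2.1 θ)) hB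
  obtain ⟨φ, ⟨hφ, hfix⟩, huniq⟩ := existsUnique_isFixedPt_of_sup_contracting
    (LipSet.isClosed k) ⟨0, LipSet.zero_mem hk.le⟩ (fun _ h => (LipSet.lipschitzWith h).continuous)
    (fun _ h => LipSet.norm_le_one h) hmaps hC0 hC hcontr
  refine ⟨hcontr, φ, ⟨hφ, hfix, fun θ => by rw [← hΓ φ hφ θ, hfix]⟩, ?_⟩
  rintro ψ ⟨hψ, hψfix, -⟩
  exact huniq ψ ⟨hψ, hψfix⟩
end
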